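/- arXiv:2204.01045 — 4 statements merged into one kernel-verified Lean document; each statement's English description precedes it below -/
import Mathlib

section
/- Let f be an entire function of the form f(x) = C x^m e^{σx} ∏_{i=1}^∞ (1 + α_i x) with C ∈ ℂ∖{0}, m ∈ ℕ, σ ≥ 0, α_i ≥ 0, and ∑_i α_i < ∞. Then f is the locally uniform limit of a sequence of polynomials all of whose zeros lie in (−∞,0]. -/
open Filter Finset Topology

namespace LaguerreAux

lemma norm_le_exp_of_norm_sub_one_le {g : ℂ} {a : ℝ} (h : ‖g - 1‖ ≤ a) :
    ‖g‖ ≤ Real.exp a := by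
  have h1 : ‖g‖ ≤ a + 1 := by
    have : g = (g - 1) + 1 := by ring
    rw [this]
    calc ‖(g - 1) + 1‖ ≤ ‖g - 1‖ + ‖(1:ℂ)‖ := norm_add_le _ _
      _ ≤ a + 1 := by rw [norm_one]; linarith
  linarith [Real.add_one_le_exp a]

lemma norm_prod_le (a : ℕ → ℝ) (g : ℕ → ℂ) (hg : ∀ i, ‖g i - 1‖ ≤ a i) (s : Finset ℕ) :
    ‖∏ i ∈ s, g i‖ ≤ Real.exp (∑ i ∈ s, a i) := by
  rw [Real.exp_sum]
  calc ‖∏ i ∈ s, g i‖ = ∏ i ∈ s, ‖g i‖ := norm_prod s g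
    _ ≤ ∏ i ∈ s, Real.exp (a i) :=
      Finset.prod_le_prod (fun i _ => norm_nonneg _)
        fun i _ => norm_le_exp_of_norm_sub_one_le (hg i)

lemma norm_prod_sub_one_le (a : ℕ → ℝ) (g : ℕ → ℂ) (ha : ∀ i, 0 ≤ a i)
    (hg : ∀ i, ‖g i - 1‖ ≤ a i) (s : Finset ℕ) :
    ‖(∏ i ∈ s, g i) - 1‖ ≤ Real.exp (∑ i ∈ s, a i) - 1 := by
  induction s using Finset.cons_induction with
  | empty => simp
  | cons j s hj ih =>
    rw [Finset.prod_cons, Finset.sum_cons]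
    have h1 : ‖∏ i ∈ s, g i‖ ≤ Real.exp (∑ i ∈ s, a i) := norm_prod_le a g hg s
    have h2 : (1:ℝ) ≤ Real.exp (∑ i ∈ s, a i) :=
      Real.one_le_exp (Finset.sum_nonneg fun i _ => ha i)
    have key : g j * ∏ i ∈ s, g i - 1
        = (g j - 1) * ∏ i ∈ s, g i + ((∏ i ∈ s, g i) - 1) := by ring
    rw [key]
    calc ‖(g j - 1) * ∏ i ∈ s, g i + ((∏ i ∈ s, g i) - 1)‖
        ≤ ‖(g j - 1) * ∏ i ∈ s, g i‖ + ‖(∏ i ∈ s, g i) - 1‖ := norm_add_le _ _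
      _ ≤ a j * Real.exp (∑ i ∈ s, a i) + (Real.exp (∑ i ∈ s, a i) - 1) := by
          rw [norm_mul]
          exact add_le_add (mul_le_mul (hg j) h1 (norm_nonneg _) (ha j)) ih
      _ ≤ Real.exp (a j + ∑ i ∈ s, a i) - 1 := by
          rw [Real.exp_add]
          nlinarith [Real.add_one_le_exp (a j), Real.exp_pos (∑ i ∈ s, a i)]

lemma multipliable_of_norm_sub_one_le (a : ℕ → ℝ) (g : ℕ → ℂ) (ha : ∀ i, 0 ≤ a i)
    (hg : ∀ i, ‖g i - 1‖ ≤ a i) (hsa : Summable a) : Multipliable g := by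
  have hA : ∀ s : Finset ℕ, ∑ i ∈ s, a i ≤ ∑' i, a i :=
    fun s => Summable.sum_le_tsum s (fun i _ => ha i) hsa
  have hcauchy : CauchySeq (fun s : Finset ℕ => ∏ i ∈ s, g i) := by
    rw [Metric.cauchySeq_iff']
    intro ε hε
    have hexpA : (0:ℝ) < Real.exp (∑' i, a i) := Real.exp_pos _
    set δ := Real.log (1 + ε / Real.exp (∑' i, a i)) with hδdef
    have hδ : 0 < δ := Real.log_pos (by have := div_pos hε hexpA; linarith)
    obtain ⟨s₀, hs₀⟩ := summable_iff_vanishing.mp hsa (Metric.ball 0 δ)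
      (Metric.ball_mem_nhds _ hδ)
    refine ⟨s₀, fun t ht => ?_⟩
    have hsub : s₀ ⊆ t := ht
    have hsd : ∑ i ∈ t \ s₀, a i < δ := by
      have := hs₀ (t \ s₀) sdiff_disjoint
      rw [Metric.mem_ball, dist_zero_right, Real.norm_eq_abs] at this
      exact lt_of_abs_lt this
    have hkey : (∏ i ∈ t, g i) - ∏ i ∈ s₀, g i
        = ((∏ i ∈ t \ s₀, g i) - 1) * ∏ i ∈ s₀, g i := by
      rw [← Finset.prod_sdiff hsub]; ring
    rw [dist_eq_norm, hkey, norm_mul]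
    calc ‖(∏ i ∈ t \ s₀, g i) - 1‖ * ‖∏ i ∈ s₀, g i‖
        ≤ (Real.exp (∑ i ∈ t \ s₀, a i) - 1) * Real.exp (∑' i, a i) := by
          apply mul_le_mul (norm_prod_sub_one_le a g ha hg _) ?_ (norm_nonneg _)
          · have : (1:ℝ) ≤ Real.exp (∑ i ∈ t \ s₀, a i) :=
              Real.one_le_exp (Finset.sum_nonneg fun i _ => ha i)
            linarith
          · exact (norm_prod_le a g hg s₀).trans (Real.exp_le_exp.mpr (hA s₀))
      _ < (Real.exp δ - 1) * Real.exp (∑' i, a i) := by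
          apply mul_lt_mul_of_pos_right _ hexpA
          exact sub_lt_sub_right (Real.exp_lt_exp.mpr hsd) 1
      _ = ε := by
          rw [hδdef, Real.exp_log (by positivity)]
          field_simp
          ring
  obtain ⟨x, hx⟩ := cauchySeq_tendsto_of_complete hcauchy
  exact ⟨x, hx⟩

lemma norm_tprod_sub_one_le (a : ℕ → ℝ) (g : ℕ → ℂ) (ha : ∀ i, 0 ≤ a i)
    (hg : ∀ i, ‖g i - 1‖ ≤ a i) (hsa : Summable a) :
    ‖(∏' i, g i) - 1‖ ≤ Real.exp (∑' i, a i) - 1 := by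
  have hm := multipliable_of_norm_sub_one_le a g ha hg hsa
  have hp : Tendsto (fun s : Finset ℕ => ∏ i ∈ s, g i) atTop (𝓝 (∏' i, g i)) := hm.hasProd
  have hcont : Tendsto (fun s : Finset ℕ => ‖(∏ i ∈ s, g i) - 1‖) atTop
      (𝓝 ‖(∏' i, g i) - 1‖) := (hp.sub_const 1).norm
  refine le_of_tendsto hcont (Eventually.of_forall fun s => ?_)
  calc ‖(∏ i ∈ s, g i) - 1‖ ≤ Real.exp (∑ i ∈ s, a i) - 1 := norm_prod_sub_one_le a g ha hg s
    _ ≤ Real.exp (∑' i, a i) - 1 := by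
        have := Summable.sum_le_tsum s (fun i _ => ha i) hsa
        have := Real.exp_le_exp.mpr this
        linarith

lemma exp_sub_pow_le {w : ℂ} {n : ℕ} (hn : 1 ≤ n) (hw : ‖w‖ ≤ n) :
    ‖Complex.exp w - (1 + w / n) ^ n‖ ≤ Real.exp ‖w‖ * ‖w‖ ^ 2 / n := by
  have hn0 : (n:ℂ) ≠ 0 := Nat.cast_ne_zero.mpr (by omega)
  have hn0' : (0:ℝ) < n := by exact_mod_cast Nat.pos_of_ne_zero (by omega)
  set a := Complex.exp (w / n) with hadef
  set b := (1 + w / n : ℂ) with hbdef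
  have hwn : ‖w / (n:ℂ)‖ = ‖w‖ / n := by
    rw [norm_div]; norm_num
  have hw1 : ‖w / (n:ℂ)‖ ≤ 1 := by
    rw [hwn, div_le_one hn0']; exact hw
  have hab : ‖a - b‖ ≤ (‖w‖ / n) ^ 2 := by
    have h := Complex.norm_exp_sub_one_sub_id_le (x := w / n) hw1
    have : a - b = Complex.exp (w/n) - 1 - w/n := by rw [hadef, hbdef]; ring
    rw [this]
    calc ‖Complex.exp (w/n) - 1 - w/n‖ ≤ ‖w/n‖ ^ 2 := h
      _ = (‖w‖ / n) ^ 2 := by rw [hwn]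
  have hna : ‖a‖ ≤ Real.exp (‖w‖ / n) := by
    rw [hadef, Complex.norm_exp]
    apply Real.exp_le_exp.mpr
    calc (w / n).re ≤ ‖w / n‖ := Complex.re_le_norm _
      _ = ‖w‖ / n := by rw [hwn]
  have hnb : ‖b‖ ≤ Real.exp (‖w‖ / n) := by
    calc ‖b‖ ≤ ‖(1:ℂ)‖ + ‖w / (n:ℂ)‖ := norm_add_le _ _
      _ = ‖w‖ / n + 1 := by rw [norm_one, hwn]; ring
      _ ≤ Real.exp (‖w‖ / n) := Real.add_one_le_exp _
  have hexp : Complex.exp w = a ^ n := by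
    rw [hadef, ← Complex.exp_nat_mul]
    congr 1
    field_simp
  have hgeom : Complex.exp w - b ^ n
      = (∑ i ∈ Finset.range n, a ^ i * b ^ (n - 1 - i)) * (a - b) := by
    rw [hexp, geom_sum₂_mul]
  have hterm : ∀ i ∈ Finset.range n, ‖a ^ i * b ^ (n - 1 - i)‖ ≤ Real.exp ‖w‖ := by
    intro i hi
    have hi' : i < n := Finset.mem_range.mp hi
    have hE1 : (1:ℝ) ≤ Real.exp (‖w‖ / n) := Real.one_le_exp (by positivity)
    calc ‖a ^ i * b ^ (n - 1 - i)‖ = ‖a‖ ^ i * ‖b‖ ^ (n - 1 - i) := by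
          rw [norm_mul, norm_pow, norm_pow]
      _ ≤ Real.exp (‖w‖ / n) ^ i * Real.exp (‖w‖ / n) ^ (n - 1 - i) := by
          exact mul_le_mul (pow_le_pow_left₀ (norm_nonneg _) hna i)
            (pow_le_pow_left₀ (norm_nonneg _) hnb _) (by positivity) (by positivity)
      _ = Real.exp (‖w‖ / n) ^ (n - 1) := by
          rw [← pow_add]; congr 1; omega
      _ ≤ Real.exp (‖w‖ / n) ^ n := pow_le_pow_right₀ hE1 (by omega)
      _ = Real.exp ‖w‖ := by
          rw [← Real.exp_nat_mul]; congr 1; field_simp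
  calc ‖Complex.exp w - (1 + w / n) ^ n‖
      = ‖∑ i ∈ Finset.range n, a ^ i * b ^ (n - 1 - i)‖ * ‖a - b‖ := by
        rw [← hbdef, hgeom, norm_mul]
    _ ≤ (n * Real.exp ‖w‖) * ((‖w‖ / n) ^ 2) := by
        apply mul_le_mul _ hab (norm_nonneg _) (by positivity)
        calc ‖∑ i ∈ Finset.range n, a ^ i * b ^ (n - 1 - i)‖
            ≤ ∑ i ∈ Finset.range n, ‖a ^ i * b ^ (n - 1 - i)‖ := norm_sum_le _ _
          _ ≤ ∑ _i ∈ Finset.range n, Real.exp ‖w‖ := Finset.sum_le_sum hterm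
          _ = n * Real.exp ‖w‖ := by
              rw [Finset.sum_const, Finset.card_range, nsmul_eq_mul]
    _ = Real.exp ‖w‖ * ‖w‖ ^ 2 / n := by field_simp

end LaguerreAux

open LaguerreAux

/-- An entire function of the Laguerre form `C x^m e^{σx} ∏ (1 + αᵢ x)` with
`C ≠ 0`, `σ ≥ 0`, `αᵢ ≥ 0`, `∑ αᵢ < ∞` is a locally uniform limit of polynomials
all of whose zeros lie in `(-∞, 0]`. -/
theorem laguerre_form_mem_LPplus
    (f : ℂ → ℂ) (C : ℂ) (hC : C ≠ 0) (m : ℕ) (σ : ℝ) (hσ : 0 ≤ σ)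
    (α : ℕ → ℝ) (hα : ∀ i, 0 ≤ α i) (hsum : Summable α)
    (hf : ∀ x : ℂ, f x = C * x ^ m * Complex.exp ((σ : ℂ) * x) *
      ∏' i : ℕ, (1 + (α i : ℂ) * x)) :
    ∃ P : ℕ → Polynomial ℂ,
      (∀ n, ∀ z : ℂ, (P n).eval z = 0 → ∃ r : ℝ, r ≤ 0 ∧ z = (r : ℂ)) ∧
      TendstoLocallyUniformly (fun n z => (P n).eval z) f atTop := by
  classical
  set P : ℕ → Polynomial ℂ := fun n =>
    Polynomial.C C * Polynomial.X ^ m *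
      (1 + Polynomial.C ((σ : ℂ) / n) * Polynomial.X) ^ n *
      ∏ i ∈ Finset.range n, (1 + Polynomial.C ((α i : ℂ)) * Polynomial.X) with hP
  have hPeval : ∀ n (z : ℂ), (P n).eval z =
      C * z ^ m * (1 + (σ : ℂ) / n * z) ^ n *
        ∏ i ∈ Finset.range n, (1 + (α i : ℂ) * z) := by
    intro n z
    simp [hP, Polynomial.eval_prod]
  refine ⟨P, ?_, ?_⟩
  · intro n z hz
    rw [hPeval] at hz
    rcases mul_eq_zero.mp hz with hz1 | hz2
    · rcases mul_eq_zero.mp hz1 with hz3 | hz4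
      · rcases mul_eq_zero.mp hz3 with hz5 | hz6
        · exact absurd hz5 hC
        · refine ⟨0, le_refl _, ?_⟩
          have hz0 : z = 0 := (pow_eq_zero_iff'.mp hz6).1
          simp [hz0]
      · -- (1 + σ/n z)^n = 0
        have hn : n ≠ 0 := by
          intro h; rw [h] at hz4; simp at hz4
        have h1 : 1 + (σ:ℂ)/n * z = 0 := by
          have := pow_eq_zero_iff hn |>.mp hz4
          exact this
        have hσ0 : σ ≠ 0 := by
          intro h; rw [h] at h1; simp at h1
        have hσpos : 0 < σ := lt_of_le_of_ne hσ (Ne.symm hσ0)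
        refine ⟨-(n / σ), by
          have h9 : (0:ℝ) ≤ (n:ℝ) / σ := by positivity
          linarith, ?_⟩
        have hnC : (n:ℂ) ≠ 0 := Nat.cast_ne_zero.mpr hn
        have hσC : (σ:ℂ) ≠ 0 := Complex.ofReal_ne_zero.mpr hσ0
        field_simp at h1
        push_cast
        rw [← neg_div, eq_div_iff hσC]
        linear_combination h1
    · -- product = 0
      obtain ⟨i, _, hi⟩ := Finset.prod_eq_zero_iff.mp hz2
      have hαi : α i ≠ 0 := by
        intro h; rw [h] at hi; simp at hi
      have hαpos : 0 < α i := lt_of_le_of_ne (hα i) (Ne.symm hαi)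
      refine ⟨-(1 / α i), by
        have h9 : (0:ℝ) ≤ 1 / α i := by positivity
        linarith, ?_⟩
      have hαC : ((α i : ℝ):ℂ) ≠ 0 := Complex.ofReal_ne_zero.mpr hαi
      push_cast
      rw [← neg_div, eq_div_iff hαC]
      linear_combination hi
  · rw [tendstoLocallyUniformly_iff_forall_isCompact]
    intro K hK
    obtain ⟨R₀, hR₀⟩ := hK.isBounded.subset_closedBall (0:ℂ)
    set R := max R₀ 0 with hRdef
    have hR0 : 0 ≤ R := le_max_right _ _
    have hKR : K ⊆ Metric.closedBall 0 R :=
      hR₀.trans (Metric.closedBall_subset_closedBall (le_max_left _ _))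
    apply TendstoUniformlyOn.mono _ hKR
    set a : ℕ → ℝ := fun i => α i * R with ha_def
    have ha : ∀ i, 0 ≤ a i := fun i => mul_nonneg (hα i) hR0
    have hsa : Summable a := hsum.mul_right R
    set A := ∑' i, a i with hA
    set Kc := ‖C‖ * R ^ m * Real.exp (σ * R) * Real.exp A with hKc
    have hKc0 : 0 ≤ Kc := by positivity
    set b : ℕ → ℝ :=
      fun n => Kc * ((Real.exp (∑' k, a (k + n)) - 1) + (σ*R)^2 / n) with hb
    have hb0 : Tendsto b atTop (𝓝 0) := by
      have h1 : Tendsto (fun n => ∑' k, a (k + n)) atTop (𝓝 0) := tendsto_sum_nat_add a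
      have h2 : Tendsto (fun n => Real.exp (∑' k, a (k+n)) - 1) atTop (𝓝 0) := by
        have h3 := (Real.continuous_exp.tendsto 0).comp h1
        simpa using h3.sub_const 1
      have h3 : Tendsto (fun n : ℕ => (σ*R)^2 / (n:ℝ)) atTop (𝓝 0) :=
        tendsto_const_div_atTop_nhds_zero_nat _
      have h4 := (h2.add h3).const_mul Kc
      simpa [hb] using h4
    rw [Metric.tendstoUniformlyOn_iff]
    intro ε hε
    have hev1 : ∀ᶠ n in atTop, b n < ε := hb0.eventually (gt_mem_nhds hε)
    have hev2 : ∀ᶠ n : ℕ in atTop, σ * R ≤ n ∧ 1 ≤ n := by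
      filter_upwards [eventually_ge_atTop (max 1 ⌈σ * R⌉₊)] with n hn
      constructor
      · have : ⌈σ * R⌉₊ ≤ n := le_trans (le_max_right _ _) hn
        exact le_trans (Nat.le_ceil _) (by exact_mod_cast this)
      · exact le_trans (le_max_left _ _) hn
    filter_upwards [hev1, hev2] with n hbn hn2
    obtain ⟨hσRn, hn1⟩ := hn2
    intro z hz
    have hzR : ‖z‖ ≤ R := by
      rwa [Metric.mem_closedBall, dist_zero_right] at hz
    set g : ℕ → ℂ := fun i => 1 + (α i : ℂ) * z with hgdef
    have hg : ∀ i, ‖g i - 1‖ ≤ a i := by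
      intro i
      rw [hgdef]
      simp only [add_sub_cancel_left]
      rw [norm_mul, Complex.norm_real, Real.norm_eq_abs, abs_of_nonneg (hα i)]
      exact mul_le_mul_of_nonneg_left hzR (hα i)
    set t := ∑' k, a (k + n) with htdef
    have ht0 : 0 ≤ t := tsum_nonneg fun k => ha _
    have hsa' : Summable (fun k => a (k + n)) := (summable_nat_add_iff n).mpr hsa
    have hmt : Multipliable (fun k => g (k + n)) :=
      multipliable_of_norm_sub_one_le (fun k => a (k + n)) _ (fun k => ha _)
        (fun k => hg _) hsa'
    set Tn := ∏' k, g (k + n) with hTdef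
    set Qn := ∏ i ∈ Finset.range n, g i with hQndef
    have hQsplit : (∏' i, g i) = Qn * Tn := (hmt.hasProd.prod_range_mul).tprod_eq
    have hQn : ‖Qn‖ ≤ Real.exp A := by
      refine (norm_prod_le a g hg _).trans (Real.exp_le_exp.mpr ?_)
      exact Summable.sum_le_tsum _ (fun i _ => ha i) hsa
    have hTn : ‖Tn - 1‖ ≤ Real.exp t - 1 :=
      norm_tprod_sub_one_le (fun k => a (k + n)) _ (fun k => ha _) (fun k => hg _) hsa'
    set E := Complex.exp ((σ:ℂ) * z) with hEdef
    set En := (1 + (σ:ℂ)/n * z) ^ n with hEndef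
    have hwnorm : ‖(σ:ℂ) * z‖ = σ * ‖z‖ := by
      rw [norm_mul, Complex.norm_real, Real.norm_eq_abs, abs_of_nonneg hσ]
    have hwR : ‖(σ:ℂ) * z‖ ≤ σ * R := by
      rw [hwnorm]; exact mul_le_mul_of_nonneg_left hzR hσ
    have hE : ‖E‖ ≤ Real.exp (σ * R) := by
      rw [hEdef, Complex.norm_exp]
      apply Real.exp_le_exp.mpr
      calc ((σ:ℂ) * z).re ≤ ‖(σ:ℂ) * z‖ := Complex.re_le_norm _
        _ = ‖(σ:ℂ) * z‖ := rfl
        _ ≤ σ * R := hwR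
    have hEn : ‖E - En‖ ≤ Real.exp (σ * R) * (σ * R)^2 / n := by
      have hwn : ‖(σ:ℂ) * z‖ ≤ (n:ℝ) := le_trans hwR hσRn
      have h := exp_sub_pow_le (w := (σ:ℂ) * z) hn1 hwn
      have hEn' : En = (1 + ((σ:ℂ) * z) / n) ^ n := by
        rw [hEndef]; congr 1; ring
      rw [hEdef, hEn']
      refine h.trans ?_
      have hn0' : (0:ℝ) < n := by exact_mod_cast Nat.pos_of_ne_zero (by omega)
      gcongr
    rw [dist_eq_norm, hf z, hPeval n z]
    have hfz : C * z ^ m * Complex.exp ((σ:ℂ) * z) * (∏' i, (1 + (α i : ℂ) * z))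
        - C * z ^ m * (1 + (σ:ℂ)/n * z) ^ n * ∏ i ∈ Finset.range n, (1 + (α i : ℂ) * z)
        = C * z ^ m * (E * (Qn * (Tn - 1)) + (E - En) * Qn) := by
      have h1 : (∏' i, (1 + (α i : ℂ) * z)) = Qn * Tn := hQsplit
      rw [h1]
      rw [hEdef, hEndef, hQndef, hgdef]
      ring
    rw [hfz]
    have hbound : ‖C * z ^ m * (E * (Qn * (Tn - 1)) + (E - En) * Qn)‖ ≤ b n := by
      calc ‖C * z ^ m * (E * (Qn * (Tn - 1)) + (E - En) * Qn)‖
          = ‖C‖ * ‖z‖ ^ m * ‖E * (Qn * (Tn - 1)) + (E - En) * Qn‖ := by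
            rw [norm_mul, norm_mul, norm_pow]
        _ ≤ ‖C‖ * ‖z‖ ^ m * (‖E‖ * (‖Qn‖ * ‖Tn - 1‖) + ‖E - En‖ * ‖Qn‖) := by
            gcongr
            calc ‖E * (Qn * (Tn - 1)) + (E - En) * Qn‖
                ≤ ‖E * (Qn * (Tn - 1))‖ + ‖(E - En) * Qn‖ := norm_add_le _ _
              _ = ‖E‖ * (‖Qn‖ * ‖Tn - 1‖) + ‖E - En‖ * ‖Qn‖ := by
                  rw [norm_mul, norm_mul, norm_mul]
        _ ≤ ‖C‖ * R ^ m * (Real.exp (σ * R) * (Real.exp A * (Real.exp t - 1))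
              + (Real.exp (σ * R) * (σ * R)^2 / n) * Real.exp A) := by
            have hTn0 : (0:ℝ) ≤ Real.exp t - 1 := by
              have := Real.one_le_exp ht0; linarith
            gcongr
        _ = b n := by rw [hb, hKc, htdef]; ring
    calc ‖C * z ^ m * (E * (Qn * (Tn - 1)) + (E - En) * Qn)‖ ≤ b n := hbound
      _ < ε := hbn
end

section
/- For every real a > 0 and m ∈ ℕ, the function 1F1(a+m; a; x) equals e^x times a polynomial of degree m in x. -/
/-- Rising factorial of a real number. -/
noncomputable def risingR (a : ℝ) (n : ℕ) : ℝ := (ascPochhammer ℝ n).eval a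

lemma risingR_zero (a : ℝ) : risingR a 0 = 1 := by
  simp [risingR]

lemma risingR_succ (a : ℝ) (m : ℕ) : risingR a (m + 1) = risingR a m * (a + m) := by
  simp [risingR, ascPochhammer_succ_right]

lemma risingR_mul (a : ℝ) (n m : ℕ) :
    risingR a n * risingR (a + n) m = risingR a (n + m) := by
  have h := congrArg (Polynomial.eval a) (ascPochhammer_mul (S := ℝ) n m)
  simpa [risingR, Polynomial.eval_comp] using h

lemma risingR_pos (a : ℝ) (ha : 0 < a) (n : ℕ) : 0 < risingR a n :=
  ascPochhammer_pos n a ha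

/-- Key auxiliary lemma proved by induction on `m`. -/
lemma aux_hasSum (m : ℕ) : ∀ a : ℝ, ∃ Q : Polynomial ℂ, Q.Monic ∧ Q.degree = m ∧
    ∀ x : ℂ, HasSum (fun n : ℕ =>
      ((risingR (a + n) m / n.factorial : ℝ) : ℂ) * x ^ n) (Complex.exp x * Q.eval x) := by
  induction m with
  | zero =>
    intro a
    refine ⟨1, Polynomial.monic_one, by simp, fun x => ?_⟩
    have hs : Summable fun n : ℕ => x ^ n / (n.factorial : ℂ) :=
      NormedSpace.expSeries_div_summable x
    have hexp : Complex.exp x = ∑' n : ℕ, x ^ n / (n.factorial : ℂ) := by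
      rw [Complex.exp_eq_exp_ℂ, NormedSpace.exp_eq_tsum_div]
    have := hs.hasSum
    rw [← hexp] at this
    have heq : (fun n : ℕ => ((risingR (a + n) 0 / n.factorial : ℝ) : ℂ) * x ^ n)
        = fun n : ℕ => x ^ n / (n.factorial : ℂ) := by
      funext n
      rw [risingR_zero]
      push_cast
      field_simp
    rw [heq]
    simpa using this
  | succ m ih =>
    intro a
    obtain ⟨Q₁, hQ₁m, hQ₁d, h₁⟩ := ih a
    obtain ⟨Q₂, hQ₂m, hQ₂d, h₂⟩ := ih (a + 1)
    have hXQ : (Polynomial.X * Q₂).degree = ((m + 1 : ℕ) : WithBot ℕ) := by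
      rw [Polynomial.degree_mul, Polynomial.degree_X, hQ₂d]
      push_cast; ring
    have hle : (Polynomial.C ((a : ℂ) + m) * Q₁).degree ≤ (m : WithBot ℕ) := by
      refine (Polynomial.degree_mul_le _ _).trans ?_
      rw [hQ₁d]
      simpa using add_le_add_left (Polynomial.degree_C_le (a := ((a : ℂ) + m)))
        (m : WithBot ℕ)
    have hlt : (Polynomial.C ((a : ℂ) + m) * Q₁).degree < (Polynomial.X * Q₂).degree := by
      refine hle.trans_lt ?_
      rw [hXQ]
      exact_mod_cast Nat.lt_succ_self m
    refine ⟨Polynomial.X * Q₂ + Polynomial.C ((a : ℂ) + m) * Q₁, ?_, ?_, ?_⟩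
    · exact Polynomial.Monic.add_of_left ((Polynomial.monic_X).mul hQ₂m) hlt
    · rw [Polynomial.degree_add_eq_left_of_degree_lt hlt, hXQ]
    · intro x
      -- shifted sum: HasSum s (x * (exp x * Q₂.eval x)) where s n = n * rising / n! * x^n
      have hshift : HasSum (fun n : ℕ =>
          (((n : ℝ) * risingR (a + n) m / n.factorial : ℝ) : ℂ) * x ^ n)
          (x * (Complex.exp x * Q₂.eval x)) := by
        have h2x := (h₂ x).mul_left x
        have key : (fun j : ℕ =>
            (((↑(j + 1) : ℝ) * risingR (a + ↑(j + 1)) m / (j + 1).factorial : ℝ) : ℂ)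
              * x ^ (j + 1))
            = fun j : ℕ => x * (((risingR (a + 1 + j) m / j.factorial : ℝ) : ℂ) * x ^ j) := by
          funext j
          have hb : (a + ↑(j + 1) : ℝ) = a + 1 + j := by push_cast; ring
          have hfac : ((j + 1).factorial : ℝ) = (j + 1) * j.factorial := by
            rw [Nat.factorial_succ]; push_cast; ring
          have hcoef : ((↑(j + 1) : ℝ) * risingR (a + ↑(j + 1)) m / (j + 1).factorial : ℝ)
              = risingR (a + 1 + j) m / j.factorial := by
            rw [hb, hfac]
            have hj1 : ((j : ℝ) + 1) ≠ 0 := by positivity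
            field_simp
            push_cast
            ring
          rw [hcoef, pow_succ]
          push_cast
          ring
        rw [← key] at h2x
        have := (hasSum_nat_add_iff (f := fun n : ℕ =>
          (((n : ℝ) * risingR (a + n) m / n.factorial : ℝ) : ℂ) * x ^ n) 1).mp h2x
        simpa using this
      have hmain := (h₁ x).mul_left ((a : ℂ) + m)
      have hsum := hmain.add hshift
      have heq : (fun n : ℕ => ((a : ℂ) + m) * (((risingR (a + n) m / n.factorial : ℝ) : ℂ)
            * x ^ n) + (((n : ℝ) * risingR (a + n) m / n.factorial : ℝ) : ℂ) * x ^ n)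
          = fun n : ℕ => ((risingR (a + n) (m + 1) / n.factorial : ℝ) : ℂ) * x ^ n := by
        funext n
        have : risingR (a + n) (m + 1) = risingR (a + n) m * (a + n + m) :=
          risingR_succ _ _
        rw [this]
        have hfac : ((n.factorial : ℝ)) ≠ 0 := by positivity
        push_cast
        field_simp
        ring
      rw [heq] at hsum
      convert hsum using 1
      · rfl
      simp [Polynomial.eval_add, Polynomial.eval_mul]
      ring

/-- For `a > 0` and `m ∈ ℕ`, the function `1F1(a+m; a; x)` equals `e^x` times a
polynomial of degree `m`. -/
theorem oneFone_eq_exp_mul_polynomial (a : ℝ) (ha : 0 < a) (m : ℕ) :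
    ∃ P : Polynomial ℂ, P.degree = m ∧
      ∀ x : ℂ,
        (∑' n : ℕ, ((risingR (a + m) n / (risingR a n * n.factorial) : ℝ) : ℂ) * x ^ n)
          = Complex.exp x * P.eval x := by
  obtain ⟨Q, hQm, hQd, hQ⟩ := aux_hasSum m a
  have hc : risingR a m ≠ 0 := (risingR_pos a ha m).ne'
  refine ⟨Polynomial.C (((risingR a m)⁻¹ : ℝ) : ℂ) * Q, ?_, fun x => ?_⟩
  · rw [Polynomial.degree_C_mul, hQd]
    simpa using hc
  · have hterm : ∀ n : ℕ, ((risingR (a + m) n / (risingR a n * n.factorial) : ℝ) : ℂ) * x ^ n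
        = (((risingR a m)⁻¹ : ℝ) : ℂ) * (((risingR (a + n) m / n.factorial : ℝ) : ℂ) * x ^ n) := by
      intro n
      have h1 : risingR a n * risingR (a + n) m = risingR a (n + m) := risingR_mul a n m
      have h2 : risingR a m * risingR (a + m) n = risingR a (n + m) := by
        rw [risingR_mul a m n, Nat.add_comm]
      have hn : risingR a n ≠ 0 := (risingR_pos a ha n).ne'
      have hfac : ((n.factorial : ℝ)) ≠ 0 := by positivity
      have hcoef : (risingR (a + m) n / (risingR a n * n.factorial) : ℝ)
          = (risingR a m)⁻¹ * (risingR (a + n) m / n.factorial) := by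
        field_simp
        nlinarith [h1, h2]
      rw [hcoef]
      push_cast
      ring
    have hsum := (hQ x).mul_left ((((risingR a m)⁻¹ : ℝ) : ℂ))
    calc (∑' n : ℕ, ((risingR (a + m) n / (risingR a n * n.factorial) : ℝ) : ℂ) * x ^ n)
        = ∑' n : ℕ, (((risingR a m)⁻¹ : ℝ) : ℂ)
            * (((risingR (a + n) m / n.factorial : ℝ) : ℂ) * x ^ n) := by
          exact tsum_congr hterm
      _ = (((risingR a m)⁻¹ : ℝ) : ℂ) * (Complex.exp x * Q.eval x) := hsum.tsum_eq
      _ = Complex.exp x * (Polynomial.C (((risingR a m)⁻¹ : ℝ) : ℂ) * Q).eval x := by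
          simp [Polynomial.eval_mul]
          ring
end

section
/- Let f be an entire function with f(0) ≠ 0 that belongs to LP⁺, i.e. f(x) = C e^{σx} ∏_i (1 + α_i x) with σ, α_i ≥ 0, ∑ α_i < ∞. Then the sequence s_n = (−1)^n [x^n](f'/f) is a Stieltjes moment sequence: there exists a positive Borel measure μ on [0,∞) with s_n = ∫ t^n dμ(t) for all n ≥ 0. -/
open MeasureTheory

open scoped ENNReal

namespace LPauxSt

variable {σ : ℝ} {α : ℕ → ℝ}

lemma summable_pow (hα : ∀ i, 0 ≤ α i) (hsum : Summable α) (n : ℕ) :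
    Summable fun i => α i * α i ^ n := by
  have hA : ∀ i, α i ≤ ∑' j, α j := fun i => Summable.le_tsum hsum i fun j _ => hα j
  refine Summable.of_nonneg_of_le
    (fun i => mul_nonneg (hα i) (pow_nonneg (hα i) n)) (fun i => ?_)
    (hsum.mul_right ((∑' j, α j) ^ n))
  exact mul_le_mul_of_nonneg_left (pow_le_pow_left₀ (hα i) (hA i) n) (hα i)

/-- The representing measure `σ δ₀ + ∑ αᵢ δ_{αᵢ}`. -/
noncomputable def mu (σ : ℝ) (α : ℕ → ℝ) : Measure ℝ :=
  ENNReal.ofReal σ • Measure.dirac 0 +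
    Measure.sum (fun i => ENNReal.ofReal (α i) • Measure.dirac (α i))

lemma mu_Iio (σ : ℝ) (hα : ∀ i, 0 ≤ α i) : mu σ α (Set.Iio 0) = 0 := by
  have hm : MeasurableSet (Set.Iio (0 : ℝ)) := measurableSet_Iio
  have h0 : (Measure.dirac (0 : ℝ)) (Set.Iio 0) = 0 := by
    rw [Measure.dirac_apply' _ hm]
    simp
  have hi : ∀ i, (Measure.dirac (α i)) (Set.Iio 0) = 0 := by
    intro i
    rw [Measure.dirac_apply' _ hm]
    simp [Set.indicator_of_notMem, not_lt.mpr (hα i)]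
  simp [mu, Measure.sum_apply _ hm, h0, hi]

lemma lint_mu (σ : ℝ) (α : ℕ → ℝ) (g : ℝ → ℝ≥0∞) :
    ∫⁻ t, g t ∂(mu σ α) =
      ENNReal.ofReal σ * g 0 + ∑' i, ENNReal.ofReal (α i) * g (α i) := by
  simp [mu, lintegral_add_measure, lintegral_smul_measure, lintegral_sum_measure,
    lintegral_dirac]

lemma integrable_mu (hσ : 0 ≤ σ) (hα : ∀ i, 0 ≤ α i) (hsum : Summable α) (n : ℕ) :
    Integrable (fun t : ℝ => t ^ n) (mu σ α) := by
  refine ⟨(measurable_id.pow_const n).aestronglyMeasurable, ?_⟩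
  rw [HasFiniteIntegral, lint_mu]
  have h1 : ∀ i, ENNReal.ofReal (α i) * ‖(α i) ^ n‖ₑ
      = ENNReal.ofReal (α i * α i ^ n) := by
    intro i
    rw [← ofReal_norm, Real.norm_of_nonneg (pow_nonneg (hα i) n),
      ← ENNReal.ofReal_mul (hα i)]
  have h2 : (∑' i, ENNReal.ofReal (α i) * ‖(α i) ^ n‖ₑ)
      = ENNReal.ofReal (∑' i, α i * α i ^ n) := by
    rw [ENNReal.ofReal_tsum_of_nonneg (fun i => mul_nonneg (hα i) (pow_nonneg (hα i) n)) (summable_pow hα hsum n)]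
    exact tsum_congr h1
  rw [h2]
  exact ENNReal.add_lt_top.mpr
    ⟨ENNReal.mul_lt_top ENNReal.ofReal_lt_top enorm_lt_top, ENNReal.ofReal_lt_top⟩

lemma integral_mu (hσ : 0 ≤ σ) (hα : ∀ i, 0 ≤ α i) (hsum : Summable α) (n : ℕ) :
    ∫ t : ℝ, t ^ n ∂(mu σ α) = σ * 0 ^ n + ∑' i, α i * α i ^ n := by
  have hint := integrable_mu hσ hα hsum n
  rw [mu, integrable_add_measure] at hint
  rw [mu, integral_add_measure hint.1 hint.2]
  congr 1
  · rw [integral_smul_measure, integral_dirac]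
    simp [ENNReal.toReal_ofReal hσ]
  · rw [integral_sum_measure hint.2]
    refine tsum_congr fun i => ?_
    rw [integral_smul_measure, integral_dirac]
    simp [ENNReal.toReal_ofReal (hα i)]

end LPauxSt

/-- For an entire `f ∈ LP⁺` with `f(0) ≠ 0`, i.e. `f(x) = C e^{σx} ∏ (1 + αᵢ x)` with
`σ, αᵢ ≥ 0` and `∑ αᵢ < ∞`, the sequence `sₙ = (-1)ⁿ [xⁿ](f'/f)` is a Stieltjes
moment sequence: there is a positive measure `μ` on `[0,∞)` with `sₙ = ∫ tⁿ dμ`. -/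
theorem LPplus_logDeriv_isStieltjes
    (f : ℂ → ℂ) (C : ℂ) (hC : C ≠ 0) (σ : ℝ) (hσ : 0 ≤ σ)
    (α : ℕ → ℝ) (hα : ∀ i, 0 ≤ α i) (hsum : Summable α)
    (hf : ∀ x : ℂ, f x = C * Complex.exp ((σ : ℂ) * x) * ∏' i : ℕ, (1 + (α i : ℂ) * x)) :
    ∃ μ : Measure ℝ, μ (Set.Iio 0) = 0 ∧
      ∀ n : ℕ, Integrable (fun t : ℝ => t ^ n) μ ∧
        (-1 : ℂ) ^ n *
            (iteratedDeriv n (fun x => deriv f x / f x) 0 / n.factorial)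
          = ((∫ t : ℝ, t ^ n ∂μ : ℝ) : ℂ) := by
  classical
  -- basic quantities
  set A : ℝ := ∑' i, α i with hA_def
  have hA0 : 0 ≤ A := tsum_nonneg hα
  have hAi : ∀ i, α i ≤ A := fun i => Summable.le_tsum hsum i fun j _ => hα j
  set r : ℝ := (2 * (A + 1))⁻¹ with hr_def
  have hr0 : 0 < r := by positivity
  have hr_half : r ≤ 1 / 2 := by
    rw [hr_def]
    have h2 : (2:ℝ) ≤ 2 * (A + 1) := by nlinarith
    calc (2 * (A + 1))⁻¹ ≤ (2:ℝ)⁻¹ := inv_anti₀ (by norm_num) h2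
    _ = 1 / 2 := by norm_num
  have hAr : A * r ≤ 1 / 2 := by
    rw [hr_def, inv_eq_one_div, mul_one_div, div_le_div_iff₀ (by positivity) (by norm_num)]
    linarith
  have hAr1 : A * r < 1 := lt_of_le_of_lt hAr (by norm_num)
  -- ball estimates
  have hball : ∀ x : ℂ, x ∈ Metric.ball (0:ℂ) r → ∀ i, ‖(α i : ℂ) * x‖ ≤ 1 / 2 := by
    intro x hx i
    rw [norm_mul, Complex.norm_real, Real.norm_of_nonneg (hα i)]
    calc α i * ‖x‖ ≤ A * r :=
          mul_le_mul (hAi i) (le_of_lt (mem_ball_zero_iff.mp hx)) (norm_nonneg x) hA0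
    _ ≤ 1 / 2 := hAr
  have hre : ∀ x ∈ Metric.ball (0:ℂ) r, ∀ i, 1 / 2 ≤ (1 + (α i : ℂ) * x).re := by
    intro x hx i
    have h2 : |((α i : ℂ) * x).re| ≤ 1 / 2 :=
      le_trans (Complex.abs_re_le_norm _) (hball x hx i)
    have h3 : (1 + (α i : ℂ) * x).re = 1 + ((α i : ℂ) * x).re := by simp
    rw [h3]
    have := abs_le.mp h2
    linarith [this.1]
  have hslit : ∀ x ∈ Metric.ball (0:ℂ) r, ∀ i, (1 + (α i : ℂ) * x) ∈ Complex.slitPlane :=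
    fun x hx i => Or.inl (by linarith [hre x hx i])
  have hnorm_ge : ∀ x ∈ Metric.ball (0:ℂ) r, ∀ i, 1 / 2 ≤ ‖1 + (α i : ℂ) * x‖ := by
    intro x hx i
    exact le_trans (hre x hx i) (Complex.re_le_norm (1 + (α i : ℂ) * x))
  have hne : ∀ x ∈ Metric.ball (0:ℂ) r, ∀ i, 1 + (α i : ℂ) * x ≠ 0 := by
    intro x hx i h
    have := hnorm_ge x hx i
    rw [h] at this
    norm_num at this
  have hlogsum : ∀ x ∈ Metric.ball (0:ℂ) r,
      Summable fun i => Complex.log (1 + (α i : ℂ) * x) := by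
    intro x hx
    refine Summable.of_norm_bounded (g := fun i => 3 / 2 * (α i * r))
      (by simpa using ((hsum.mul_right r).mul_left (3 / 2))) fun i => ?_
    calc ‖Complex.log (1 + (α i : ℂ) * x)‖ ≤ 3 / 2 * ‖(α i : ℂ) * x‖ :=
          Complex.norm_log_one_add_half_le_self (hball x hx i)
    _ ≤ 3 / 2 * (α i * r) := by
        rw [norm_mul, Complex.norm_real, Real.norm_of_nonneg (hα i)]
        have hxr := (mem_ball_zero_iff.mp hx).le
        gcongr
        exact hα i
  set L : ℂ → ℂ := fun x => ∑' i, Complex.log (1 + (α i : ℂ) * x) with hL_def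
  set S : ℂ → ℂ := fun x => ∑' i, (α i : ℂ) / (1 + (α i : ℂ) * x) with hS_def
  have hLderiv : ∀ x ∈ Metric.ball (0:ℂ) r, HasDerivAt L (S x) x := by
    intro x hx
    refine hasDerivAt_tsum_of_isPreconnected (u := fun i => 2 * α i)
      (g := fun i z => Complex.log (1 + (α i : ℂ) * z))
      (g' := fun i z => (α i : ℂ) / (1 + (α i : ℂ) * z))
      (hsum.mul_left 2) Metric.isOpen_ball ((convex_ball _ _).isPreconnected)
      (fun i z hz => ?_) (fun i z hz => ?_) (Metric.mem_ball_self hr0) ?_ hx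
    · have h1 : HasDerivAt (fun z : ℂ => 1 + (α i : ℂ) * z) ((α i : ℂ)) z := by
        simpa using ((hasDerivAt_id z).const_mul ((α i : ℂ))).const_add 1
      exact h1.clog (hslit z hz i)
    · rw [norm_div, Complex.norm_real, Real.norm_of_nonneg (hα i)]
      have h2 := hnorm_ge z hz i
      calc α i / ‖1 + (α i : ℂ) * z‖ ≤ α i / (1 / 2) := by
            apply div_le_div_of_nonneg_left (hα i) (by norm_num) h2
      _ = 2 * α i := by ring
    · refine Summable.congr (f := fun _ : ℕ => (0 : ℂ)) summable_zero fun i => ?_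
      simp
  have hprod : ∀ x ∈ Metric.ball (0:ℂ) r,
      (∏' i, (1 + (α i : ℂ) * x)) = Complex.exp (L x) := by
    intro x hx
    have h := Complex.cexp_tsum_eq_tprod (f := fun i => 1 + (α i : ℂ) * x)
      (fun i => hne x hx i) (hlogsum x hx)
    exact h.symm
  have hlog : ∀ x ∈ Metric.ball (0:ℂ) r, deriv f x / f x = (σ : ℂ) + S x := by
    intro x hx
    have hG : HasDerivAt (fun z => (σ : ℂ) * z + L z) ((σ : ℂ) + S x) x := by
      simpa [Pi.add_def] using (((hasDerivAt_id x).const_mul ((σ : ℂ))).add (hLderiv x hx))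
    have hF : HasDerivAt (fun z => C * Complex.exp ((σ : ℂ) * z + L z))
        (C * (Complex.exp ((σ : ℂ) * x + L x) * ((σ : ℂ) + S x))) x := hG.cexp.const_mul C
    have hfF : ∀ z ∈ Metric.ball (0:ℂ) r, f z = C * Complex.exp ((σ : ℂ) * z + L z) := by
      intro z hz
      rw [hf z, hprod z hz, Complex.exp_add, mul_assoc]
    have hfd : HasDerivAt f (C * (Complex.exp ((σ : ℂ) * x + L x) * ((σ : ℂ) + S x))) x := by
      apply hF.congr_of_eventuallyEq
      filter_upwards [Metric.isOpen_ball.mem_nhds hx] with z hz using hfF z hz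
    have hE : C * Complex.exp ((σ : ℂ) * x + L x) ≠ 0 := mul_ne_zero hC (Complex.exp_ne_zero _)
    rw [hfd.deriv, hfF x hx,
      show C * (Complex.exp ((σ : ℂ) * x + L x) * ((σ : ℂ) + S x))
        = (C * Complex.exp ((σ : ℂ) * x + L x)) * ((σ : ℂ) + S x) from by ring,
      mul_div_cancel_left₀ _ hE]
  -- the power series coefficients
  set sR : ℕ → ℝ := fun n => σ * 0 ^ n + ∑' i, α i * α i ^ n with hsR_def
  set c : ℕ → ℂ := fun n => (-1) ^ n * ((sR n : ℝ) : ℂ) with hc_def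
  set p := FormalMultilinearSeries.ofScalars ℂ c with hp_def
  have hsR_nonneg : ∀ n, 0 ≤ sR n := by
    intro n
    refine add_nonneg (by positivity) (tsum_nonneg fun i => mul_nonneg (hα i) (pow_nonneg (hα i) n))
  have hsR_le : ∀ n, sR n ≤ σ + A * A ^ n := by
    intro n
    refine add_le_add ?_ ?_
    · calc σ * 0 ^ n ≤ σ * 1 := by
            refine mul_le_mul_of_nonneg_left ?_ hσ
            rcases n with _ | n <;> simp
      _ = σ := mul_one σ
    · calc (∑' i, α i * α i ^ n) ≤ ∑' i, α i * A ^ n := by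
            refine Summable.tsum_le_tsum (fun i => ?_) (LPauxSt.summable_pow hα hsum n) (hsum.mul_right _)
            exact mul_le_mul_of_nonneg_left (pow_le_pow_left₀ (hα i) (hAi i) n) (hα i)
      _ = A * A ^ n := by rw [tsum_mul_right]
  have hradius : ENNReal.ofReal r ≤ p.radius := by
    have hcoe : ((r.toNNReal : ℝ)) = r := Real.coe_toNNReal _ hr0.le
    have hs : Summable fun n => ‖p n‖ * (r.toNNReal : ℝ) ^ n := by
      refine Summable.of_nonneg_of_le (fun n => by positivity) (fun n => ?_)
        (((summable_geometric_of_lt_one hr0.le (lt_of_le_of_lt hr_half (by norm_num))).mul_left σ).add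
          ((summable_geometric_of_lt_one (by positivity) hAr1).mul_left A))
      rw [hcoe, hp_def, FormalMultilinearSeries.ofScalars_norm, hc_def]
      rw [norm_mul, norm_pow, norm_neg, norm_one, one_pow, one_mul, Complex.norm_real,
        Real.norm_of_nonneg (hsR_nonneg n)]
      calc sR n * r ^ n ≤ (σ + A * A ^ n) * r ^ n := by
            exact mul_le_mul_of_nonneg_right (hsR_le n) (by positivity)
      _ = σ * r ^ n + A * (A * r) ^ n := by rw [mul_pow]; ring
    exact le_trans (le_of_eq (by simp [ENNReal.ofReal])) (p.le_radius_of_summable_norm hs)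
  have hps : HasFPowerSeriesOnBall (fun x => deriv f x / f x) p 0 (ENNReal.ofReal r) := by
    refine ⟨hradius, ENNReal.ofReal_pos.mpr hr0, ?_⟩
    intro y hy
    have hyr : ‖y‖ < r := by
      rw [EMetric.mem_ball, edist_zero_right, ← ofReal_norm] at hy
      exact (ENNReal.ofReal_lt_ofReal_iff hr0).mp hy
    have hyball : y ∈ Metric.ball (0:ℂ) r := mem_ball_zero_iff.mpr hyr
    rw [zero_add, hlog y hyball]
    have happ : ∀ n, (p n fun _ => y) = c n * y ^ n := by
      intro n
      rw [hp_def, FormalMultilinearSeries.ofScalars_apply_eq, smul_eq_mul]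
    simp only [happ]
    -- the double series
    have hay : ∀ i, ‖-((α i : ℂ) * y)‖ < 1 := fun i => by
      rw [norm_neg]; exact lt_of_le_of_lt (hball y hyball i) one_half_lt_one
    set F2 : ℕ × ℕ → ℂ := fun q => (α q.2 : ℂ) * (-((α q.2 : ℂ) * y)) ^ q.1 with hF2_def
    have hF2 : Summable F2 := by
      refine Summable.of_norm_bounded (g := fun q : ℕ × ℕ => (A * r) ^ q.1 * α q.2)
        ((summable_geometric_of_lt_one (mul_nonneg hA0 hr0.le) hAr1).mul_of_nonneg hsum
          (fun n => pow_nonneg (mul_nonneg hA0 hr0.le) n) hα) fun q => ?_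
      rw [hF2_def]
      simp only [norm_mul, norm_pow, norm_neg, Complex.norm_real, Real.norm_of_nonneg (hα q.2)]
      rw [mul_comm]
      refine mul_le_mul_of_nonneg_right (pow_le_pow_left₀ (mul_nonneg (hα q.2) (norm_nonneg y)) ?_ _) (hα q.2)
      exact mul_le_mul (hAi q.2) hyr.le (norm_nonneg y) hA0
    have hsumC : ∀ n : ℕ, HasSum (fun i => F2 (n, i))
        ((-1 : ℂ) ^ n * y ^ n * ((∑' i, α i * α i ^ n : ℝ) : ℂ)) := by
      intro n
      have h1 : HasSum (fun i => ((α i * α i ^ n : ℝ) : ℂ))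
          (((∑' i, α i * α i ^ n : ℝ) : ℂ)) :=
        Complex.hasSum_ofReal.mpr (LPauxSt.summable_pow hα hsum n).hasSum
      have h2 := h1.mul_left ((-1 : ℂ) ^ n * y ^ n)
      have h3 : (fun i => F2 (n, i))
          = fun i => ((-1 : ℂ) ^ n * y ^ n) * ((α i * α i ^ n : ℝ) : ℂ) := by
        funext i
        rw [hF2_def]
        push_cast
        ring
      rw [h3]
      exact h2
    have hsumI : ∀ i : ℕ, HasSum (fun n => F2 (n, i))
        ((α i : ℂ) / (1 + (α i : ℂ) * y)) := by
      intro i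
      have h1 := (hasSum_geometric_of_norm_lt_one (hay i)).mul_left ((α i : ℂ))
      rw [sub_neg_eq_add] at h1
      rw [div_eq_mul_inv]
      exact h1
    have hTsum : HasSum (fun n => (-1 : ℂ) ^ n * y ^ n * ((∑' i, α i * α i ^ n : ℝ) : ℂ))
        (∑' q : ℕ × ℕ, F2 q) := hF2.hasSum.prod_fiberwise hsumC
    have hSy : HasSum (fun i => (α i : ℂ) / (1 + (α i : ℂ) * y)) (∑' q : ℕ × ℕ, F2 q) := by
      have he : Summable (F2 ∘ (Equiv.prodComm ℕ ℕ)) :=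
        ((Equiv.prodComm ℕ ℕ).summable_iff).mpr hF2
      have h2 : HasSum (F2 ∘ (Equiv.prodComm ℕ ℕ)) (∑' q : ℕ × ℕ, F2 q) := by
        have h3 := he.hasSum
        have h4 : ∑' q : ℕ × ℕ, (F2 ∘ (Equiv.prodComm ℕ ℕ)) q = ∑' q : ℕ × ℕ, F2 q :=
          (Equiv.prodComm ℕ ℕ).tsum_eq F2
        rwa [h4] at h3
      exact h2.prod_fiberwise fun i => hsumI i
    have hSval : S y = ∑' q : ℕ × ℕ, F2 q := by
      rw [hS_def]
      exact hSy.tsum_eq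
    rw [hSval]
    have hσs : HasSum (fun n : ℕ => if n = 0 then ((σ : ℝ) : ℂ) else 0) ((σ : ℝ) : ℂ) :=
      hasSum_ite_eq 0 ((σ : ℝ) : ℂ)
    have hfun : (fun n : ℕ => c n * y ^ n)
        = fun n => (if n = 0 then ((σ : ℝ) : ℂ) else 0)
          + (-1 : ℂ) ^ n * y ^ n * ((∑' i, α i * α i ^ n : ℝ) : ℂ) := by
      funext n
      simp only [hc_def, hsR_def]
      rcases n with _ | m
      · push_cast
        simp
      · push_cast
        simp [pow_succ]
        ring
    rw [hfun]
    exact hσs.add hTsum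
  -- conclusion
  refine ⟨LPauxSt.mu σ α, LPauxSt.mu_Iio σ hα, fun n => ⟨LPauxSt.integrable_mu hσ hα hsum n, ?_⟩⟩
  rw [LPauxSt.integral_mu hσ hα hsum n]
  have hco := hps.factorial_smul (y := (1 : ℂ)) n
  have hone : (p n fun _ => (1 : ℂ)) = c n := by
    rw [hp_def, FormalMultilinearSeries.ofScalars_apply_eq, one_pow, smul_eq_mul, mul_one]
  have hit : iteratedDeriv n (fun x => deriv f x / f x) 0 = (n.factorial : ℂ) * c n := by
    rw [iteratedDeriv_eq_iteratedFDeriv, ← hco, hone, nsmul_eq_mul]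
  rw [hit]
  have hn : ((n.factorial : ℂ)) ≠ 0 := Nat.cast_ne_zero.mpr n.factorial_ne_zero
  rw [mul_div_cancel_left₀ _ hn, hc_def, hsR_def]
  rw [← mul_assoc, ← mul_pow]
  norm_num
end

section
/- (Stieltjes, necessity direction) If (a_n)_{n≥0} is a Stieltjes moment sequence with a_0 > 0 whose generating function has a (formal) continued fraction expansion ∑ a_n t^n = α_0/(1 − α_1 t/(1 − α_2 t/(1 − ⋯))) with all α_1,…,α_{n-1} ≠ 0 up to depth n, then α_1, …, α_n ≥ 0. -/
open MeasureTheory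


noncomputable def Bpol (α : ℕ → ℝ) : ℕ → Polynomial ℝ
  | 0 => 1
  | 1 => 1
  | (m+2) => Bpol α (m+1) - Polynomial.C (α (m+1)) * Polynomial.X * Bpol α m

noncomputable def Apol (α : ℕ → ℝ) : ℕ → Polynomial ℝ
  | 0 => 0
  | 1 => Polynomial.C (α 0)
  | (m+2) => Apol α (m+1) - Polynomial.C (α (m+1)) * Polynomial.X * Apol α m

lemma Bpol_coeff_zero (α : ℕ → ℝ) : ∀ m, (Bpol α m).coeff 0 = 1 := by
  intro m
  induction m using Nat.twoStepInduction with
  | zero => simp [Bpol]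
  | one => simp [Bpol]
  | more m ih1 ih2 =>
    rw [Bpol, Polynomial.coeff_sub, ih2, mul_assoc, Polynomial.coeff_C_mul,
      Polynomial.coeff_X_mul_zero, mul_zero, sub_zero]

lemma Bpol_coeff_high (α : ℕ → ℝ) : ∀ m j, m + 1 ≤ 2 * j → (Bpol α m).coeff j = 0 := by
  intro m
  induction m using Nat.twoStepInduction with
  | zero => intro j hj; have hj1 : 1 ≤ j := by omega
            simp [Bpol, Polynomial.coeff_one, hj1]
            omega
  | one => intro j hj; have hj1 : 1 ≤ j := by omega
           simp [Bpol, Polynomial.coeff_one]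
           omega
  | more m ih1 ih2 =>
    intro j hj
    have hj1 : 1 ≤ j := by omega
    obtain ⟨i, rfl⟩ : ∃ i, j = i + 1 := ⟨j - 1, by omega⟩
    rw [Bpol, Polynomial.coeff_sub, ih2 (i+1) (by omega), mul_assoc,
      Polynomial.coeff_C_mul, Polynomial.coeff_X_mul,
      ih1 i (by omega), mul_zero, sub_zero]

lemma Apol_coeff_high (α : ℕ → ℝ) : ∀ m j, m ≤ 2 * j → (Apol α m).coeff j = 0 := by
  intro m
  induction m using Nat.twoStepInduction with
  | zero => intro j hj; simp [Apol]
  | one => intro j hj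
           have hj1 : 1 ≤ j := by omega
           simp [Apol, Polynomial.coeff_C]
           omega
  | more m ih1 ih2 =>
    intro j hj
    have hj1 : 1 ≤ j := by omega
    obtain ⟨i, rfl⟩ : ∃ i, j = i + 1 := ⟨j - 1, by omega⟩
    rw [Apol, Polynomial.coeff_sub, ih2 (i+1) (by omega), mul_assoc,
      Polynomial.coeff_C_mul, Polynomial.coeff_X_mul,
      ih1 i (by omega), mul_zero, sub_zero]

lemma cf_claim (a : ℕ → ℝ) (α : ℕ → ℝ) (G : ℕ → PowerSeries ℝ)
    (hG : ∀ k : ℕ,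
      G k * (1 - PowerSeries.C (α (k + 1)) * PowerSeries.X * G (k + 1)) = 1)
    (hgen : PowerSeries.mk a = PowerSeries.C (α 0) * G 0) :
    ∀ m, PowerSeries.mk a * (Bpol α m : PowerSeries ℝ) =
      (Apol α m : PowerSeries ℝ) +
        PowerSeries.C (∏ i ∈ Finset.range (m+1), α i) * PowerSeries.X ^ m *
          ∏ i ∈ Finset.range (m+1), G i := by
  intro m
  induction m using Nat.twoStepInduction with
  | zero => simpa [Bpol, Apol] using hgen
  | one =>
    simp only [Bpol, Apol, Polynomial.coe_one, Polynomial.coe_C,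
      Finset.prod_range_succ, Finset.prod_range_zero, Finset.prod_range_one,
      map_mul, map_one, one_mul, pow_one, hgen]
    linear_combination PowerSeries.C (α 0) * hG 0
  | more m ih1 ih2 =>
    simp only [Finset.prod_range_succ, map_mul, pow_succ] at ih1 ih2 ⊢
    simp only [Bpol, Apol, Polynomial.coe_sub, Polynomial.coe_mul,
      Polynomial.coe_C, Polynomial.coe_X]
    linear_combination ih2 - PowerSeries.C (α (m+1)) * PowerSeries.X * ih1 +
      (PowerSeries.C (∏ i ∈ Finset.range m, α i) * PowerSeries.C (α m) *
        PowerSeries.C (α (m+1)) * PowerSeries.X ^ m * PowerSeries.X *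
        ((∏ i ∈ Finset.range m, G i) * G m)) * hG (m+1)

lemma cf_coeff (a : ℕ → ℝ) (α : ℕ → ℝ) (G : ℕ → PowerSeries ℝ)
    (hG : ∀ k : ℕ,
      G k * (1 - PowerSeries.C (α (k + 1)) * PowerSeries.X * G (k + 1)) = 1)
    (hgen : PowerSeries.mk a = PowerSeries.C (α 0) * G 0) (m N : ℕ) :
    PowerSeries.coeff N (PowerSeries.mk a * (Bpol α m : PowerSeries ℝ)) =
      (Apol α m).coeff N +
        (if m ≤ N then (∏ i ∈ Finset.range (m+1), α i) *
          PowerSeries.coeff (N - m) (∏ i ∈ Finset.range (m+1), G i) else 0) := by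
  rw [cf_claim a α G hG hgen m, map_add, Polynomial.coeff_coe]
  congr 1
  have h : PowerSeries.C (∏ i ∈ Finset.range (m+1), α i) * PowerSeries.X ^ m *
      ∏ i ∈ Finset.range (m+1), G i =
      PowerSeries.X ^ m * (PowerSeries.C (∏ i ∈ Finset.range (m+1), α i) *
        ∏ i ∈ Finset.range (m+1), G i) := by ring
  rw [h, PowerSeries.coeff_X_pow_mul', PowerSeries.coeff_C_mul]

lemma cf_constantCoeff_G (α : ℕ → ℝ) (G : ℕ → PowerSeries ℝ)
    (hG : ∀ k : ℕ,
      G k * (1 - PowerSeries.C (α (k + 1)) * PowerSeries.X * G (k + 1)) = 1)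
    (i : ℕ) : PowerSeries.constantCoeff (G i) = 1 := by
  have := congrArg (PowerSeries.constantCoeff) (hG i)
  simpa using this

lemma cf_coeff_zero_prod_G (α : ℕ → ℝ) (G : ℕ → PowerSeries ℝ)
    (hG : ∀ k : ℕ,
      G k * (1 - PowerSeries.C (α (k + 1)) * PowerSeries.X * G (k + 1)) = 1)
    (m : ℕ) : PowerSeries.coeff 0 (∏ i ∈ Finset.range m, G i) = 1 := by
  rw [PowerSeries.coeff_zero_eq_constantCoeff, map_prod]
  exact Finset.prod_eq_one fun i _ => cf_constantCoeff_G α G hG i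

lemma cf_int_aux (a : ℕ → ℝ) (μ : Measure ℝ)
    (hint : ∀ m : ℕ, Integrable (fun t : ℝ => t ^ m) μ)
    (hmom : ∀ m : ℕ, a m = ∫ t : ℝ, t ^ m ∂μ)
    (c : ℕ → ℝ) (k e : ℕ) :
    Integrable (fun t : ℝ => t ^ e * ∑ j ∈ Finset.range (k+1), c j * t ^ (k-j)) μ ∧
    ∫ t : ℝ, t ^ e * ∑ j ∈ Finset.range (k+1), c j * t ^ (k-j) ∂μ =
      ∑ j ∈ Finset.range (k+1), c j * a (e + (k-j)) := by
  have h1 : (fun t : ℝ => t ^ e * ∑ j ∈ Finset.range (k+1), c j * t ^ (k-j)) =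
      fun t : ℝ => ∑ j ∈ Finset.range (k+1), c j * t ^ (e + (k-j)) := by
    funext t
    rw [Finset.mul_sum]
    refine Finset.sum_congr rfl fun j _ => ?_
    rw [pow_add]; ring
  rw [h1]
  constructor
  · exact integrable_finset_sum _ fun j _ => (hint _).const_mul _
  · rw [integral_finset_sum _ fun j _ => (hint _).const_mul _]
    refine Finset.sum_congr rfl fun j _ => ?_
    rw [MeasureTheory.integral_const_mul, ← hmom]

lemma cf_key (a : ℕ → ℝ) (μ : Measure ℝ)
    (hint : ∀ m : ℕ, Integrable (fun t : ℝ => t ^ m) μ)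
    (hmom : ∀ m : ℕ, a m = ∫ t : ℝ, t ^ m ∂μ)
    (α : ℕ → ℝ) (G : ℕ → PowerSeries ℝ)
    (hG : ∀ k : ℕ,
      G k * (1 - PowerSeries.C (α (k + 1)) * PowerSeries.X * G (k + 1)) = 1)
    (hgen : PowerSeries.mk a = PowerSeries.C (α 0) * G 0)
    (M k : ℕ) (hM : M ≤ 2*k+1) (s : ℕ) :
    ∫ t : ℝ, t ^ s * ∑ j ∈ Finset.range (k+1), (Bpol α M).coeff j * t ^ (k-j) ∂μ =
      (Apol α M).coeff (s+k) +
        (if M ≤ s+k then (∏ i ∈ Finset.range (M+1), α i) *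
          PowerSeries.coeff (s+k-M) (∏ i ∈ Finset.range (M+1), G i) else 0) := by
  rw [(cf_int_aux a μ hint hmom _ k s).2, ← cf_coeff a α G hG hgen M (s+k)]
  rw [mul_comm (PowerSeries.mk a), PowerSeries.coeff_mul,
    Finset.Nat.sum_antidiagonal_eq_sum_range_succ_mk]
  simp only [Polynomial.coeff_coe, PowerSeries.coeff_mk]
  have e1 : ∑ j ∈ Finset.range (k+1), (Bpol α M).coeff j * a (s + (k-j)) =
      ∑ j ∈ Finset.range (k+1), (Bpol α M).coeff j * a (s+k-j) := by
    refine Finset.sum_congr rfl fun j hj => ?_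
    rw [Finset.mem_range] at hj
    congr 2
    omega
  rw [e1]
  refine Finset.sum_subset (Finset.range_subset_range.2 (by omega : k+1 ≤ s+k+1)) ?_
  intro j hj hj2
  rw [Finset.mem_range] at hj hj2
  rw [Bpol_coeff_high α M j (by omega), zero_mul]

lemma cf_even (a : ℕ → ℝ) (μ : Measure ℝ)
    (hint : ∀ m : ℕ, Integrable (fun t : ℝ => t ^ m) μ)
    (hmom : ∀ m : ℕ, a m = ∫ t : ℝ, t ^ m ∂μ)
    (α : ℕ → ℝ) (G : ℕ → PowerSeries ℝ)
    (hG : ∀ k : ℕ,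
      G k * (1 - PowerSeries.C (α (k + 1)) * PowerSeries.X * G (k + 1)) = 1)
    (hgen : PowerSeries.mk a = PowerSeries.C (α 0) * G 0)
    (k : ℕ) : 0 ≤ ∏ i ∈ Finset.range (2*k+1), α i := by
  set c : ℕ → ℝ := fun j => (Bpol α (2*k)).coeff j with hc
  set Pa : ℝ := ∏ i ∈ Finset.range (2*k+1), α i with hPa
  have heval : ∀ s : ℕ, s ≤ k →
      (∫ t : ℝ, t^s * ∑ j ∈ Finset.range (k+1), c j * t^(k-j) ∂μ) =
        if s = k then Pa else 0 := by
    intro s hs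
    rw [cf_key a μ hint hmom α G hG hgen (2*k) k (by omega) s,
      Apol_coeff_high α (2*k) (s+k) (by omega), zero_add]
    by_cases h : s = k
    · rw [if_pos (by omega), if_pos h]
      have h0 : s + k - 2*k = 0 := by omega
      rw [h0, cf_coeff_zero_prod_G α G hG, mul_one]
    · rw [if_neg (by omega), if_neg h]
  have hsq : ∫ t : ℝ, (∑ j ∈ Finset.range (k+1), c j * t^(k-j))^2 ∂μ = Pa := by
    have h2 : ∀ t : ℝ, (∑ j ∈ Finset.range (k+1), c j * t^(k-j))^2 =
        ∑ j ∈ Finset.range (k+1),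
          c j * (t^(k-j) * ∑ i ∈ Finset.range (k+1), c i * t^(k-i)) := by
      intro t
      rw [sq, Finset.sum_mul]
      exact Finset.sum_congr rfl fun j _ => by ring
    simp only [h2]
    rw [integral_finset_sum _
      fun j _ => ((cf_int_aux a μ hint hmom c k (k-j)).1.const_mul _)]
    have h3 : ∀ j ∈ Finset.range (k+1),
        (∫ t : ℝ, c j * (t^(k-j) * ∑ i ∈ Finset.range (k+1), c i * t^(k-i)) ∂μ) =
          c j * if k - j = k then Pa else 0 := by
      intro j hj
      rw [Finset.mem_range] at hj
      rw [MeasureTheory.integral_const_mul, heval (k-j) (by omega)]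
    rw [Finset.sum_congr rfl h3, Finset.sum_eq_single 0]
    · rw [if_pos (by omega)]
      have : c 0 = 1 := Bpol_coeff_zero α (2*k)
      rw [this, one_mul]
    · intro j hj hj0
      rw [Finset.mem_range] at hj
      rw [if_neg (by omega), mul_zero]
    · intro h
      exact absurd (Finset.mem_range.2 (by omega)) h
  have hnn : 0 ≤ ∫ t : ℝ, (∑ j ∈ Finset.range (k+1), c j * t^(k-j))^2 ∂μ :=
    integral_nonneg fun t => sq_nonneg _
  rw [hsq] at hnn
  exact hnn

lemma cf_odd (a : ℕ → ℝ) (μ : Measure ℝ) (hμ : μ (Set.Iio 0) = 0)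
    (hint : ∀ m : ℕ, Integrable (fun t : ℝ => t ^ m) μ)
    (hmom : ∀ m : ℕ, a m = ∫ t : ℝ, t ^ m ∂μ)
    (α : ℕ → ℝ) (G : ℕ → PowerSeries ℝ)
    (hG : ∀ k : ℕ,
      G k * (1 - PowerSeries.C (α (k + 1)) * PowerSeries.X * G (k + 1)) = 1)
    (hgen : PowerSeries.mk a = PowerSeries.C (α 0) * G 0)
    (k : ℕ) : 0 ≤ ∏ i ∈ Finset.range (2*k+2), α i := by
  set c : ℕ → ℝ := fun j => (Bpol α (2*k+1)).coeff j with hc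
  set Pa : ℝ := ∏ i ∈ Finset.range (2*k+2), α i with hPa
  have heval : ∀ s : ℕ, 1 ≤ s → s ≤ k+1 →
      (∫ t : ℝ, t^s * ∑ j ∈ Finset.range (k+1), c j * t^(k-j) ∂μ) =
        if s = k+1 then Pa else 0 := by
    intro s hs1 hs2
    rw [cf_key a μ hint hmom α G hG hgen (2*k+1) k (by omega) s,
      Apol_coeff_high α (2*k+1) (s+k) (by omega), zero_add]
    by_cases h : s = k+1
    · rw [if_pos (by omega), if_pos h]
      have h0 : s + k - (2*k+1) = 0 := by omega
      rw [h0, cf_coeff_zero_prod_G α G hG, mul_one]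
    · rw [if_neg (by omega), if_neg h]
  have hsq : ∫ t : ℝ, t * (∑ j ∈ Finset.range (k+1), c j * t^(k-j))^2 ∂μ = Pa := by
    have h2 : ∀ t : ℝ, t * (∑ j ∈ Finset.range (k+1), c j * t^(k-j))^2 =
        ∑ j ∈ Finset.range (k+1),
          c j * (t^(k-j+1) * ∑ i ∈ Finset.range (k+1), c i * t^(k-i)) := by
      intro t
      have : t * (∑ j ∈ Finset.range (k+1), c j * t^(k-j))^2 =
          (∑ j ∈ Finset.range (k+1), c j * t^(k-j)) *
            (t * ∑ i ∈ Finset.range (k+1), c i * t^(k-i)) := by ring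
      rw [this, Finset.sum_mul]
      refine Finset.sum_congr rfl fun j _ => ?_
      rw [pow_succ]; ring
    simp only [h2]
    rw [integral_finset_sum _
      fun j _ => ((cf_int_aux a μ hint hmom c k (k-j+1)).1.const_mul _)]
    have h3 : ∀ j ∈ Finset.range (k+1),
        (∫ t : ℝ, c j * (t^(k-j+1) * ∑ i ∈ Finset.range (k+1), c i * t^(k-i)) ∂μ) =
          c j * if k - j + 1 = k + 1 then Pa else 0 := by
      intro j hj
      rw [Finset.mem_range] at hj
      rw [MeasureTheory.integral_const_mul, heval (k-j+1) (by omega) (by omega)]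
    rw [Finset.sum_congr rfl h3, Finset.sum_eq_single 0]
    · rw [if_pos (by omega)]
      have : c 0 = 1 := Bpol_coeff_zero α (2*k+1)
      rw [this, one_mul]
    · intro j hj hj0
      rw [Finset.mem_range] at hj
      rw [if_neg (by omega), mul_zero]
    · intro h
      exact absurd (Finset.mem_range.2 (by omega)) h
  have hae : ∀ᵐ t ∂μ, (0:ℝ) ≤ t := by
    have hset : {t : ℝ | ¬ (0:ℝ) ≤ t} = Set.Iio 0 := by
      ext t; simp [not_le]
    rw [MeasureTheory.ae_iff, hset]
    exact hμ
  have hnn : 0 ≤ ∫ t : ℝ, t * (∑ j ∈ Finset.range (k+1), c j * t^(k-j))^2 ∂μ :=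
    integral_nonneg_of_ae (hae.mono fun t ht => mul_nonneg ht (sq_nonneg _))
  rw [hsq] at hnn
  exact hnn

/-- (Stieltjes, necessity direction.) If `(aₙ)` is a Stieltjes moment sequence with
`a₀ > 0` whose generating function has an S-type continued-fraction expansion
`∑ aₙ tⁿ = α₀ / (1 - α₁ t / (1 - α₂ t / (1 - ⋯)))` — encoded by power series `G k`
with `G k = 1/(1 - α_{k+1} t G (k+1))` and `∑ aₙ tⁿ = α₀ G 0` — in which
`α₁, …, α_{n-1}` are all nonzero, then `α₁, …, αₙ ≥ 0`. -/
theorem stieltjes_contfrac_coeffs_nonneg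
    (a : ℕ → ℝ) (μ : Measure ℝ) (hμ : μ (Set.Iio 0) = 0)
    (hint : ∀ m : ℕ, Integrable (fun t : ℝ => t ^ m) μ)
    (hmom : ∀ m : ℕ, a m = ∫ t : ℝ, t ^ m ∂μ)
    (ha0 : 0 < a 0)
    (n : ℕ) (α : ℕ → ℝ) (G : ℕ → PowerSeries ℝ)
    (hG : ∀ k : ℕ,
      G k * (1 - PowerSeries.C (α (k + 1)) * PowerSeries.X * G (k + 1)) = 1)
    (hgen : PowerSeries.mk a = PowerSeries.C (α 0) * G 0)
    (hne : ∀ k : ℕ, 1 ≤ k → k ≤ n - 1 → α k ≠ 0) :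
    ∀ k : ℕ, 1 ≤ k → k ≤ n → 0 ≤ α k := by
  have hPnn : ∀ m : ℕ, 0 ≤ ∏ i ∈ Finset.range (m+1), α i := by
    intro m
    rcases Nat.even_or_odd m with ⟨k, hk⟩ | ⟨k, hk⟩
    · have hm : m + 1 = 2*k + 1 := by omega
      rw [hm]
      exact cf_even a μ hint hmom α G hG hgen k
    · have hm : m + 1 = 2*k + 2 := by omega
      rw [hm]
      exact cf_odd a μ hμ hint hmom α G hG hgen k
  have hα0 : α 0 = a 0 := by
    have h := congrArg (PowerSeries.constantCoeff) hgen
    simpa [PowerSeries.constantCoeff_mk, cf_constantCoeff_G α G hG 0] using h.symm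
  have hpos : ∀ m : ℕ, m ≤ n - 1 → 0 < ∏ i ∈ Finset.range (m+1), α i := by
    intro m
    induction m with
    | zero => intro _; simpa [hα0] using ha0
    | succ m ih =>
      intro hm
      have h1 : 0 < ∏ i ∈ Finset.range (m+1), α i := ih (by omega)
      have h2 : α (m+1) ≠ 0 := hne (m+1) (by omega) hm
      have h3 := hPnn (m+1)
      rw [Finset.prod_range_succ] at h3 ⊢
      exact h3.lt_of_ne (Ne.symm (mul_ne_zero h1.ne' h2))
  intro k hk1 hk2
  have h1 : 0 < ∏ i ∈ Finset.range k, α i := by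
    have h := hpos (k-1) (by omega)
    have hk : k - 1 + 1 = k := by omega
    rwa [hk] at h
  have h2 : 0 ≤ (∏ i ∈ Finset.range k, α i) * α k := by
    have h := hPnn k
    rwa [Finset.prod_range_succ] at h
  by_contra hneg
  push_neg at hneg
  nlinarith [mul_neg_of_pos_of_neg h1 hneg]
end
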